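/- Let p be a prime and let M be a binary ℤ_p-lattice with Gram matrix [[p^n a, p^r c],[p^r c, p^n b]] where a, b, c ∈ ℤ_p^× and 0 ≤ r ≤ n - 3 (for p = 2) or 0 ≤ r ≤ n - 2 (for odd p). Then M is isometric to the scaled hyperbolic plane p^r ℍ if p = 2, and to p^r⟨1,-1⟩ if p is odd; in particular M is isotropic over ℚ_p. -/

import Mathlib

open Matrix

/-! Writing `m = n - r`, the Gram matrix is `pʳ` times `G = [[pᵐa, c],[c, pᵐb]]`. The condition on
`r` makes `‖pᵐ‖ < ‖2‖²`, so by Hensel's lemma the quadratic form of `G` has an isotropic vector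
`e = (1, y)` with `B(e, e₂) = c + pᵐby` a unit. Since `2 ∣ pᵐb`, the second basis vector can be
corrected to an isotropic `f` with `B(e, f) = 1`, so `G ≅ ℍ`; for odd `p`, `ℍ ≅ ⟨1, -1⟩` as `2` is
a unit. -/

namespace Matrix

variable {ι R : Type*} [Fintype ι] [DecidableEq ι] [CommRing R]

def Congruent (G H : Matrix ι ι R) : Prop :=
  ∃ P : Matrix ι ι R, IsUnit P.det ∧ Pᵀ * G * P = H

theorem Congruent.trans {G H K : Matrix ι ι R} (hGH : G.Congruent H) (hHK : H.Congruent K) :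
    G.Congruent K := by
  obtain ⟨P, hP, rfl⟩ := hGH
  obtain ⟨Q, hQ, rfl⟩ := hHK
  exact ⟨P * Q, by simpa [det_mul] using hP.mul hQ, by simp only [transpose_mul, Matrix.mul_assoc]⟩

theorem Congruent.smul {G H : Matrix ι ι R} (h : G.Congruent H) (s : R) :
    (s • G).Congruent (s • H) := by
  obtain ⟨P, hP, rfl⟩ := h
  exact ⟨P, hP, by rw [Matrix.mul_smul, Matrix.smul_mul, Matrix.mul_assoc]⟩

end Matrix

section BinaryForms

variable {R : Type*} [CommRing R]

theorem dotProduct_mulVec_fin_two (A c B x y : R) :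
    ![x, y] ⬝ᵥ !![A, c; c, B] *ᵥ ![x, y] = A * x ^ 2 + 2 * c * x * y + B * y ^ 2 := by
  simp [dotProduct, mulVec, Fin.sum_univ_succ]
  ring

/-- The basis `e = (1, y)`, `f = w e₂ - h w² e` with `w = (c + B y)⁻¹` and `B = 2h` is
hyperbolic: `Q(e) = 0`, `B(e, f) = 1` and `Q(f) = w² (B - 2h) = 0`. -/
theorem congruent_hyperbolic_of_isotropic {A B c y : R} (hroot : A + 2 * c * y + B * y ^ 2 = 0)
    (hunit : IsUnit (c + B * y)) (hB : 2 ∣ B) :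
    (!![A, c; c, B]).Congruent !![0, 1; 1, 0] := by
  obtain ⟨h, rfl⟩ := hB
  obtain ⟨w, hw⟩ := hunit.exists_right_inv
  refine ⟨!![1, -(h * w * w); y, w - h * w * w * y], ?_, ?_⟩
  · rw [det_fin_two_of, show 1 * (w - h * w * w * y) - -(h * w * w) * y = w by ring]
    exact .of_mul_eq_one_right _ hw
  · ext i j
    fin_cases i <;> fin_cases j <;> simp [Matrix.mul_apply, Fin.sum_univ_succ]
    · linear_combination hroot
    · linear_combination -(h * w * w) * hroot + hw
    · linear_combination -(h * w * w) * hroot + hw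
    · linear_combination (h * w * w) ^ 2 * hroot - 2 * h * w * w * hw

theorem congruent_hyperbolic_diag (h2 : IsUnit (2 : R)) :
    (!![0, 1; 1, 0] : Matrix (Fin 2) (Fin 2) R).Congruent !![1, 0; 0, -1] := by
  obtain ⟨t, ht⟩ := h2.exists_right_inv
  refine ⟨!![1, 1; t, -t], ?_, ?_⟩
  · rw [det_fin_two_of, show 1 * -t - 1 * t = -(2 * t) by ring, ht]
    exact isUnit_one.neg
  · ext i j
    fin_cases i <;> fin_cases j <;> simp [Matrix.mul_apply, Fin.sum_univ_succ]
    · linear_combination ht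
    · linear_combination -ht

end BinaryForms

theorem IsLocalRing.isUnit_add_mul {R : Type*} [CommRing R] [IsLocalRing R] {c B : R}
    (hc : IsUnit c) (hB : ¬IsUnit B) (y : R) : IsUnit (c + B * y) := by
  have : IsUnit ((c + B * y) + -(B * y)) := by simpa using hc
  refine (isUnit_or_isUnit_of_isUnit_add this).resolve_right fun h ↦ hB ?_
  exact isUnit_of_mul_isUnit_left (IsUnit.neg_iff _ |>.mp h)

namespace PadicInt

variable {p : ℕ} [Fact p.Prime]

theorem isUnit_two (hp : p ≠ 2) : IsUnit (2 : ℤ_[p]) := by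
  by_contra h
  have h2 : ‖((2 : ℤ) : ℤ_[p])‖ < 1 := by simpa using not_isUnit_iff.mp h
  rw [norm_int_lt_one_iff_dvd] at h2
  exact hp ((Nat.prime_dvd_prime_iff_eq Fact.out Nat.prime_two).mp (by exact_mod_cast h2))

theorem two_dvd_p_pow {m : ℕ} (hm : m ≠ 0) : (2 : ℤ_[p]) ∣ (p : ℤ_[p]) ^ m := by
  by_cases hp : p = 2
  · subst hp
    simpa using dvd_pow_self (2 : ℤ_[2]) hm
  · exact (isUnit_two hp).dvd

theorem norm_p_pow_lt_norm_two_sq {m : ℕ} (hm : 1 ≤ m) (h2 : p = 2 → 3 ≤ m) :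
    ‖(p : ℤ_[p]) ^ m‖ < ‖(2 : ℤ_[p])‖ ^ 2 := by
  have hp1 : (1 : ℝ) < p := by exact_mod_cast (Fact.out : p.Prime).one_lt
  rw [norm_p_pow]
  by_cases hp : p = 2
  · have hm3 := h2 hp
    rw [show (2 : ℤ_[p]) = p by simp [hp], ← norm_pow, norm_p_pow]
    exact zpow_lt_zpow_right₀ hp1 (by omega)
  · rw [isUnit_iff.mp (isUnit_two hp), one_pow, ← zpow_zero (p : ℝ)]
    exact zpow_lt_zpow_right₀ hp1 (by omega)

theorem exists_quadratic_root (A B : ℤ_[p]) {c : ℤ_[p]} (hc : IsUnit c)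
    (hA : ‖A‖ < ‖(2 : ℤ_[p])‖ ^ 2) : ∃ y : ℤ_[p], A + 2 * c * y + B * y ^ 2 = 0 := by
  open Polynomial in
  obtain ⟨y, hy, -⟩ := hensels_lemma (p := p) (F := C B * X ^ 2 + C (2 * c) * X + C A) (a := 0)
    (by simpa [norm_mul, isUnit_iff.mp hc] using hA)
  exact ⟨y, by simp at hy; linear_combination hy⟩

end PadicInt

theorem stmt_11_general (p : ℕ) [Fact p.Prime] (n r : ℕ) (a b c : ℤ_[p])
    (ha : IsUnit a) (hc : IsUnit c)
    (hr2 : p = 2 → r + 3 ≤ n) (hrodd : p ≠ 2 → r + 2 ≤ n) :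
    (∃ P : Matrix (Fin 2) (Fin 2) ℤ_[p], IsUnit P.det ∧
      Pᵀ * !![(p : ℤ_[p]) ^ n * a, (p : ℤ_[p]) ^ r * c;
              (p : ℤ_[p]) ^ r * c, (p : ℤ_[p]) ^ n * b] * P =
        (if p = 2 then (p : ℤ_[p]) ^ r • !![0, 1; 1, 0]
          else (p : ℤ_[p]) ^ r • !![1, 0; 0, -1])) ∧
    (∃ v : Fin 2 → ℚ_[p], v ≠ 0 ∧
      v ⬝ᵥ (!![(p : ℚ_[p]) ^ n * (a : ℚ_[p]), (p : ℚ_[p]) ^ r * (c : ℚ_[p]);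
              (p : ℚ_[p]) ^ r * (c : ℚ_[p]), (p : ℚ_[p]) ^ n * (b : ℚ_[p])]).mulVec v = 0) := by
  obtain ⟨m, rfl⟩ : ∃ m, n = r + m := ⟨n - r, by by_cases p = 2 <;> grind⟩
  have hm : 1 ≤ m := by by_cases p = 2 <;> grind
  have hsmall := PadicInt.norm_p_pow_lt_norm_two_sq (p := p) hm fun h ↦ by have := hr2 h; omega
  obtain ⟨y, hroot⟩ := PadicInt.exists_quadratic_root ((p : ℤ_[p]) ^ m * a) ((p : ℤ_[p]) ^ m * b) hc
    (by rwa [norm_mul, PadicInt.isUnit_iff.mp ha, mul_one])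
  have hB : ¬IsUnit ((p : ℤ_[p]) ^ m * b) := fun h ↦ PadicInt.p_nonunit
    ((isUnit_pow_iff (by omega)).mp (isUnit_of_mul_isUnit_left h))
  have hH := congruent_hyperbolic_of_isotropic hroot (IsLocalRing.isUnit_add_mul hc hB y)
    ((PadicInt.two_dvd_p_pow (by omega)).mul_right b)
  have hG : !![(p : ℤ_[p]) ^ (r + m) * a, (p : ℤ_[p]) ^ r * c;
      (p : ℤ_[p]) ^ r * c, (p : ℤ_[p]) ^ (r + m) * b] =
      (p : ℤ_[p]) ^ r • !![(p : ℤ_[p]) ^ m * a, c; c, (p : ℤ_[p]) ^ m * b] := by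
    simp only [pow_add, smul_of, smul_cons, smul_eq_mul, smul_empty, mul_assoc]
  refine ⟨?_, ![1, (y : ℚ_[p])], by simp, ?_⟩
  · rw [hG]
    split_ifs with hp
    · exact hH.smul ((p : ℤ_[p]) ^ r)
    · exact (hH.trans (congruent_hyperbolic_diag (PadicInt.isUnit_two hp))).smul _
  · have h2 : ((2 : ℤ_[p]) : ℚ_[p]) = 2 := map_ofNat PadicInt.Coe.ringHom 2
    have hrootQ := congrArg ((↑) : ℤ_[p] → ℚ_[p]) hroot
    push_cast [h2] at hrootQ
    rw [dotProduct_mulVec_fin_two]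
    linear_combination (p : ℚ_[p]) ^ r * hrootQ

/-- A binary `ℤ_p`-lattice with Gram matrix `[[pⁿa, pʳc],[pʳc, pⁿb]]`, where `a,b,c`
are units and `r ≤ n-3` (for `p = 2`) resp. `r ≤ n-2` (for odd `p`), is isometric to
`pʳℍ` when `p = 2` and to `pʳ⟨1,-1⟩` when `p` is odd; in particular it is isotropic
over `ℚ_p`. -/
theorem stmt_11 (p : ℕ) [Fact p.Prime] (n r : ℕ) (a b c : ℤ_[p])
    (ha : IsUnit a) (hb : IsUnit b) (hc : IsUnit c)
    (hr2 : p = 2 → r + 3 ≤ n) (hrodd : p ≠ 2 → r + 2 ≤ n) :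
    (∃ P : Matrix (Fin 2) (Fin 2) ℤ_[p], IsUnit P.det ∧
      Pᵀ * !![(p : ℤ_[p]) ^ n * a, (p : ℤ_[p]) ^ r * c;
              (p : ℤ_[p]) ^ r * c, (p : ℤ_[p]) ^ n * b] * P =
        (if p = 2 then (p : ℤ_[p]) ^ r • !![0, 1; 1, 0]
          else (p : ℤ_[p]) ^ r • !![1, 0; 0, -1])) ∧
    (∃ v : Fin 2 → ℚ_[p], v ≠ 0 ∧
      v ⬝ᵥ (!![(p : ℚ_[p]) ^ n * (a : ℚ_[p]), (p : ℚ_[p]) ^ r * (c : ℚ_[p]);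
              (p : ℚ_[p]) ^ r * (c : ℚ_[p]), (p : ℚ_[p]) ^ n * (b : ℚ_[p])]).mulVec v = 0) :=
  stmt_11_general p n r a b c ha hc hr2 hrodd
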